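/- arXiv:1009.0146 — 2 statements merged into one kernel-verified Lean document; each statement's English description precedes it below -/
import Mathlib

section
/- With all p_i = 2 and q_i = 1 for 3 ≤ i ≤ k (k ≥ 3), the generalized Frame-Stewart number satisfies G_k(n) = Σ_{m=0}^{j−1} binom(k+m−3, k−3)·2^m + (n − binom(k+j−3, k−2))·2^j whenever binom(k+j−3, k−2) < n ≤ binom(k+j−2, k−2); in particular these numbers coincide with the classical Frame-Stewart numbers S_k(n). -/
/-!
Give the `i`-th disc (from `0`) the cost `2 ^ j`, where `j` is the block containing `i` and the
`j`-th block has `(k + j - 3).choose (k - 3)` discs; let `F k n` be the cost of the first `n` discs.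
It has the stated closed form. Writing `N k x` for the number of discs of cost at most `x`, the
layer-cake formula gives `F k n = ∑ₓ (n - N k x)`, and Pascal's rule gives
`N k x = N k (x / 2) + N (k - 1) x`. Hence `2 F k (n - t) + F (k - 1) t` is the sum over `x` of
`(n - t - N k (x / 2)) + (t - N (k - 1) x) ≥ n - N k x`, with equality for every `x` once `t` is
chosen where the monotone `N k (x / 2) + N (k - 1) x` first reaches `n`. So `F` satisfies the
recurrence, which determines both `G` and `S`.
-/

open Finset

theorem Finset.sum_eq_sum_range_card_filter_lt {ι : Type*} (s : Finset ι) (f : ι → ℕ) {B : ℕ}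
    (hB : ∀ i ∈ s, f i ≤ B) :
    ∑ i ∈ s, f i = ∑ x ∈ range B, #{i ∈ s | x < f i} := by
  simp_rw [card_filter]
  rw [sum_comm]
  refine sum_congr rfl fun i hi => ?_
  rw [sum_boole, Nat.cast_id, (by ext x; simp only [mem_filter, mem_range]; have := hB i hi; omega :
    {x ∈ range B | x < f i} = range (f i)), card_range]

/-- For such a `t`, `n - (A x + B x) = (n - t - A x) + (t - B x)` for every `x`. -/
theorem Monotone.exists_balanced_split {A B : ℕ → ℕ} (hA : Monotone A) (hB : Monotone B) {n : ℕ}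
    (h0 : A 0 + B 0 < n) (hbig : ∃ x, n ≤ A x + B x) :
    ∃ t ≤ n, ∀ x, (A x ≤ n - t ∧ B x ≤ t) ∨ (n - t ≤ A x ∧ t ≤ B x) := by
  classical
  set x₀ := Nat.find hbig
  have hx₀ : n ≤ A x₀ + B x₀ := Nat.find_spec hbig
  have hx₀_pos : 0 < x₀ := Nat.pos_of_ne_zero fun h => by rw [h] at hx₀; omega
  have hbelow : A (x₀ - 1) + B (x₀ - 1) < n := not_le.1 (Nat.find_min hbig (by omega))
  have hA₀ := hA (Nat.sub_le x₀ 1)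
  have hB₀ := hB (Nat.sub_le x₀ 1)
  refine ⟨max (B (x₀ - 1)) (n - A x₀), by omega, fun x => ?_⟩
  rcases lt_or_ge x x₀ with hx | hx
  · have := hA (Nat.le_sub_one_of_lt hx)
    have := hB (Nat.le_sub_one_of_lt hx)
    omega
  · have := hA hx
    have := hB hx
    omega

namespace FrameStewart

/-- The discs `i` with `blockStart k j ≤ i < blockEnd k j` form the `j`-th block; it has
`(k + j - 3).choose (k - 3)` discs. -/
def blockStart (k j : ℕ) : ℕ := (k + j - 3).choose (k - 2)

def blockEnd (k j : ℕ) : ℕ := (k + j - 2).choose (k - 2)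

variable {k j : ℕ}

theorem blockStart_zero (hk : 3 ≤ k) : blockStart k 0 = 0 :=
  Nat.choose_eq_zero_of_lt (by omega)

theorem blockStart_succ : blockStart k (j + 1) = blockEnd k j := by
  rw [blockStart, blockEnd, show k + (j + 1) - 3 = k + j - 2 by omega]

theorem blockEnd_zero : blockEnd k 0 = 1 := by
  rw [blockEnd, Nat.add_zero, Nat.choose_self]

theorem blockEnd_eq_blockStart_add (hk : 3 ≤ k) :
    blockEnd k j = blockStart k j + (k + j - 3).choose (k - 3) := by
  rw [blockEnd, blockStart, show k + j - 2 = k + j - 3 + 1 by omega,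
    show k - 2 = k - 3 + 1 by omega, Nat.choose_succ_succ', add_comm]

theorem blockEnd_succ (hk : 4 ≤ k) :
    blockEnd k (j + 1) = blockEnd k j + blockEnd (k - 1) (j + 1) := by
  rw [blockEnd_eq_blockStart_add (by omega), blockStart_succ, blockEnd]
  congr 2; omega

theorem blockEnd_mono : Monotone (blockEnd k) := fun _ _ h =>
  Nat.choose_le_choose _ (by omega)

theorem lt_blockEnd (hk : 3 ≤ k) : j < blockEnd k j := by
  rw [blockEnd, ← Nat.choose_symm_of_eq_add (by omega : k + j - 2 = j + (k - 2))]
  calc j < (j + 1).choose j := by rw [Nat.choose_succ_self_right]; omega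
    _ ≤ (k + j - 2).choose j := Nat.choose_le_choose _ (by omega)

noncomputable def level (k i : ℕ) : ℕ := sInf {j | i < blockEnd k j}

theorem level_le_iff (hk : 3 ≤ k) {i : ℕ} : level k i ≤ j ↔ i < blockEnd k j :=
  ⟨fun h => (Nat.sInf_mem (s := {j | i < blockEnd k j}) ⟨i, lt_blockEnd hk⟩).trans_le
    (blockEnd_mono h), fun h => Nat.sInf_le h⟩

theorem level_eq (hk : 3 ≤ k) {i : ℕ} (h₁ : blockStart k j ≤ i) (h₂ : i < blockEnd k j) :
    level k i = j := by
  refine le_antisymm ((level_le_iff hk).2 h₂) ?_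
  cases j with
  | zero => exact Nat.zero_le _
  | succ j => exact not_le.1 fun h => ((level_le_iff hk).1 h).not_ge (blockStart_succ ▸ h₁)

theorem level_le_self (hk : 3 ≤ k) (i : ℕ) : level k i ≤ i :=
  (level_le_iff hk).2 (lt_blockEnd hk)

theorem two_pow_level_le (hk : 3 ≤ k) {i n : ℕ} (hi : i < n) : 2 ^ level k i ≤ 2 ^ n :=
  Nat.pow_le_pow_right two_pos ((level_le_self hk i).trans hi.le)

/-- Disc `i` (counted from `0`) costs `2 ^ level k i` moves; `frameStewart k n` is the total cost
of the first `n` discs. -/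
noncomputable def frameStewart (k n : ℕ) : ℕ := ∑ i ∈ range n, 2 ^ level k i

theorem frameStewart_three (n : ℕ) : frameStewart 3 n = 2 ^ n - 1 := by
  have hlevel : ∀ i, level 3 i = i := fun i =>
    level_eq le_rfl (by simp [blockStart]) (by simp [blockEnd]; omega)
  simp [frameStewart, hlevel, Nat.geomSum_eq le_rfl]

theorem frameStewart_add {a c : ℕ} (h : ∀ i, a ≤ i → i < a + c → level k i = j) :
    frameStewart k (a + c) = frameStewart k a + c * 2 ^ j := by
  rw [frameStewart, sum_range_add, ← frameStewart,
    sum_congr rfl fun i hi => by rw [h (a + i) (by omega) (by rw [mem_range] at hi; omega)]]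
  simp

theorem frameStewart_blockStart (hk : 3 ≤ k) (j : ℕ) :
    frameStewart k (blockStart k j) = ∑ m ∈ range j, (k + m - 3).choose (k - 3) * 2 ^ m := by
  induction j with
  | zero => simp [blockStart_zero hk, frameStewart]
  | succ j ih =>
    rw [sum_range_succ, ← ih, blockStart_succ, blockEnd_eq_blockStart_add hk]
    exact frameStewart_add fun i h₁ h₂ => level_eq hk h₁ (by rwa [blockEnd_eq_blockStart_add hk])

theorem frameStewart_eq (hk : 3 ≤ k) {n : ℕ} (h₁ : blockStart k j ≤ n) (h₂ : n ≤ blockEnd k j) :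
    frameStewart k n = ∑ m ∈ range j, (k + m - 3).choose (k - 3) * 2 ^ m
      + (n - blockStart k j) * 2 ^ j := by
  obtain ⟨c, rfl⟩ := Nat.exists_eq_add_of_le h₁
  rw [frameStewart_add fun i h₁ h₂ => level_eq hk h₁ (by omega), frameStewart_blockStart hk,
    Nat.add_sub_cancel_left]

/-- The number of discs `i` with `2 ^ level k i ≤ x`. -/
noncomputable def levelCount (k x : ℕ) : ℕ := if x = 0 then 0 else blockEnd k (Nat.log 2 x)

theorem lt_two_pow_level_iff (hk : 3 ≤ k) {x i : ℕ} : x < 2 ^ level k i ↔ levelCount k x ≤ i := by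
  by_cases hx : x = 0
  · simp [hx, levelCount]
  · rw [levelCount, if_neg hx, ← Nat.log_lt_iff_lt_pow one_lt_two hx, ← not_le,
      level_le_iff hk, not_lt]

theorem levelCount_mono : Monotone (levelCount k) := by
  intro x y h
  by_cases hx : x = 0
  · simp [hx, levelCount]
  · rw [levelCount, levelCount, if_neg hx, if_neg (by omega)]
    exact blockEnd_mono (Nat.log_mono_right h)

theorem levelCount_eq_add (hk : 4 ≤ k) (x : ℕ) :
    levelCount k x = levelCount k (x / 2) + levelCount (k - 1) x := by
  rcases lt_or_ge x 2 with hx | hx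
  · interval_cases x <;> simp [levelCount, blockEnd_zero]
  · obtain ⟨l, hl⟩ : ∃ l, Nat.log 2 x = l + 1 :=
      ⟨_, (Nat.succ_pred_eq_of_pos (Nat.log_pos one_lt_two hx)).symm⟩
    rw [levelCount, levelCount, levelCount, if_neg (by omega), if_neg (by omega), if_neg (by omega),
      Nat.log_div_base, hl, Nat.add_sub_cancel, blockEnd_succ hk]

theorem card_lt_two_pow_level (hk : 3 ≤ k) (n x : ℕ) :
    #{i ∈ range n | x < 2 ^ level k i} = n - levelCount k x := by
  rw [← Nat.card_Ico]
  congr 1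
  ext i
  simp only [mem_filter, mem_range, mem_Ico, lt_two_pow_level_iff hk]
  omega

theorem frameStewart_eq_sum_sub (hk : 3 ≤ k) {n B : ℕ} (hB : 2 ^ n ≤ B) :
    frameStewart k n = ∑ x ∈ range B, (n - levelCount k x) := by
  rw [frameStewart, sum_eq_sum_range_card_filter_lt (B := B)]
  · simp_rw [card_lt_two_pow_level hk]
  · exact fun i hi => (two_pow_level_le hk (mem_range.1 hi)).trans hB

theorem two_mul_frameStewart_eq_sum_sub (hk : 3 ≤ k) {n B : ℕ} (hB : 2 ^ (n + 1) ≤ B) :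
    2 * frameStewart k n = ∑ x ∈ range B, (n - levelCount k (x / 2)) := by
  rw [frameStewart, mul_sum, sum_eq_sum_range_card_filter_lt (B := B)]
  · refine sum_congr rfl fun x _ => ?_
    rw [← card_lt_two_pow_level hk]
    congr 1
    exact filter_congr fun i _ => by omega
  · intro i hi
    rw [pow_succ'] at hB
    exact (Nat.mul_le_mul_left 2 (two_pow_level_le hk (mem_range.1 hi))).trans hB

theorem two_mul_frameStewart_add_frameStewart_eq_sum (hk : 4 ≤ k) {n t : ℕ} (ht : t ≤ n) :
    2 * frameStewart k (n - t) + frameStewart (k - 1) t =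
      ∑ x ∈ range (2 ^ (n + 1)), ((n - t - levelCount k (x / 2)) + (t - levelCount (k - 1) x)) := by
  have hB {m : ℕ} (hm : m ≤ n + 1) : 2 ^ m ≤ 2 ^ (n + 1) := Nat.pow_le_pow_right two_pos hm
  rw [two_mul_frameStewart_eq_sum_sub (by omega) (hB (by omega)),
    frameStewart_eq_sum_sub (k := k - 1) (by omega) (hB (by omega)), sum_add_distrib]

theorem frameStewart_eq_sum_of_four_le (hk : 4 ≤ k) (n : ℕ) :
    frameStewart k n =
      ∑ x ∈ range (2 ^ (n + 1)), (n - (levelCount k (x / 2) + levelCount (k - 1) x)) := by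
  rw [frameStewart_eq_sum_sub (by omega) (Nat.pow_le_pow_right two_pos n.le_succ)]
  exact sum_congr rfl fun x _ => by rw [levelCount_eq_add hk x]

theorem isLeast_frameStewart (hk : 4 ≤ k) {n : ℕ} (hn : 1 ≤ n) :
    IsLeast {v | ∃ t, 1 ≤ t ∧ t ≤ n ∧ v = 2 * frameStewart k (n - t) + frameStewart (k - 1) t}
      (frameStewart k n) := by
  refine ⟨?_, ?_⟩
  · obtain ⟨t, htn, hsplit⟩ := Monotone.exists_balanced_split
      (levelCount_mono.comp fun _ _ h => Nat.div_le_div_right (c := 2) h)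
      (levelCount_mono (k := k - 1)) (n := n) (by simpa [levelCount, Nat.one_le_iff_ne_zero, Nat.pos_iff_ne_zero] using hn)
      ⟨2 ^ n, by
        rw [Function.comp_apply, ← levelCount_eq_add hk, levelCount, if_neg (by positivity),
          Nat.log_pow one_lt_two]
        exact (lt_blockEnd (by omega)).le⟩
    have ht : 1 ≤ t := by
      have := hsplit 1
      simp only [Function.comp_apply, levelCount, Nat.reduceDiv, ↓reduceIte, one_ne_zero,
        Nat.log_one_right, blockEnd_zero] at this
      omega
    refine ⟨t, ht, htn, ?_⟩
    rw [two_mul_frameStewart_add_frameStewart_eq_sum hk htn, frameStewart_eq_sum_of_four_le hk]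
    refine sum_congr rfl fun x _ => ?_
    have := hsplit x
    simp only [Function.comp_apply] at this
    omega
  · rintro v ⟨t, -, htn, rfl⟩
    rw [two_mul_frameStewart_add_frameStewart_eq_sum hk htn, frameStewart_eq_sum_of_four_le hk]
    exact sum_le_sum fun x _ => by omega

theorem eq_frameStewart (H : ℕ → ℕ → ℕ) (h₀ : ∀ k, H k 0 = 0) (h₃ : ∀ n, H 3 n = 2 ^ n - 1)
    (hrec : ∀ k, 4 ≤ k → ∀ n, 1 ≤ n →
      H k n = sInf {v | ∃ t, 1 ≤ t ∧ t ≤ n ∧ v = 2 * H k (n - t) + H (k - 1) t})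
    (hk : 3 ≤ k) (n : ℕ) : H k n = frameStewart k n := by
  induction k, hk using Nat.le_induction generalizing n with
  | base => rw [h₃, frameStewart_three]
  | succ k hk ihk =>
    induction n using Nat.strong_induction_on with
    | _ n ihn =>
      rcases Nat.eq_zero_or_pos n with rfl | hn
      · simp [h₀, frameStewart]
      · rw [hrec (k + 1) (by omega) n hn, ← (isLeast_frameStewart (by omega) hn).csInf_eq]
        congr 1
        ext v
        refine exists_congr fun t => and_congr_right fun ht => and_congr_right fun _ => ?_
        rw [ihn (n - t) (by omega), Nat.add_sub_cancel, ihk]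

end FrameStewart

theorem Nat.eq_two_pow_sub_one_of_rec {f : ℕ → ℕ} (h₀ : f 0 = 0)
    (h : ∀ n, 1 ≤ n → f n = 2 * f (n - 1) + 1) (n : ℕ) : f n = 2 ^ n - 1 := by
  induction n with
  | zero => simp [h₀]
  | succ n ih =>
    rw [h (n + 1) (by omega), Nat.add_sub_cancel, ih, pow_succ]
    have := Nat.one_le_two_pow (n := n)
    omega

theorem generalized_frame_stewart_p_two_general
    (k : ℕ) (hk : 3 ≤ k)
    (G : ℕ → ℕ → ℕ)
    (hG0 : ∀ k', G k' 0 = 0)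
    (hG3 : ∀ n, 1 ≤ n → G 3 n = 2 * G 3 (n - 1) + 1)
    (hGk : ∀ k', 4 ≤ k' → ∀ n, 1 ≤ n →
      G k' n = sInf {v | ∃ t, 1 ≤ t ∧ t ≤ n ∧ v = 2 * G k' (n - t) + G (k' - 1) t})
    (S : ℕ → ℕ → ℕ)
    (hS0 : ∀ k', S k' 0 = 0)
    (hS3 : ∀ n, 1 ≤ n → S 3 n = 2 ^ n - 1)
    (hSk : ∀ k', 4 ≤ k' → ∀ n, 1 ≤ n →
      S k' n = sInf {v | ∃ t, 1 ≤ t ∧ t ≤ n ∧ v = 2 * S k' (n - t) + S (k' - 1) t})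
    (j n : ℕ)
    (h1 : (k + j - 3).choose (k - 2) < n) (h2 : n ≤ (k + j - 2).choose (k - 2)) :
    G k n = (∑ m ∈ Finset.range j, (k + m - 3).choose (k - 3) * 2 ^ m)
        + (n - (k + j - 3).choose (k - 2)) * 2 ^ j
      ∧ ∀ m', G k m' = S k m' := by
  have hG := FrameStewart.eq_frameStewart G hG0 (Nat.eq_two_pow_sub_one_of_rec (hG0 3) hG3) hGk hk
  have hS := FrameStewart.eq_frameStewart S hS0 (fun m => by
    rcases Nat.eq_zero_or_pos m with rfl | hm
    · simp [hS0]
    · exact hS3 m hm) hSk hk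
  exact ⟨(hG n).trans (FrameStewart.frameStewart_eq hk h1.le h2), fun m => (hG m).trans (hS m).symm⟩

/-- With p_i = 2 and q_i = 1, the generalized Frame–Stewart numbers G_k have the
stated closed form on binomial intervals, and coincide with the classical
Frame–Stewart numbers S_k. -/
theorem generalized_frame_stewart_p_two
    (k : ℕ) (hk : 3 ≤ k)
    (G : ℕ → ℕ → ℕ)
    (hG0 : ∀ k', G k' 0 = 0)
    (hG3 : ∀ n, 1 ≤ n → G 3 n = 2 * G 3 (n - 1) + 1)
    (hGk : ∀ k', 4 ≤ k' → ∀ n, 1 ≤ n →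
      G k' n = sInf {v | ∃ t, 1 ≤ t ∧ t ≤ n ∧ v = 2 * G k' (n - t) + G (k' - 1) t})
    (S : ℕ → ℕ → ℕ)
    (hS0 : ∀ k', S k' 0 = 0)
    (hS3 : ∀ n, 1 ≤ n → S 3 n = 2 ^ n - 1)
    (hSk : ∀ k', 4 ≤ k' → ∀ n, 1 ≤ n →
      S k' n = sInf {v | ∃ t, 1 ≤ t ∧ t ≤ n ∧ v = 2 * S k' (n - t) + S (k' - 1) t})
    (j n : ℕ) (hn : 1 ≤ n)
    (h1 : (k + j - 3).choose (k - 2) < n) (h2 : n ≤ (k + j - 2).choose (k - 2)) :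
    G k n = (∑ m ∈ Finset.range j, (k + m - 3).choose (k - 3) * 2 ^ m)
        + (n - (k + j - 3).choose (k - 2)) * 2 ^ j
      ∧ ∀ m', G k m' = S k m' :=
  generalized_frame_stewart_p_two_general k hk G hG0 hG3 hGk S hS0 hS3 hSk j n h1 h2
end

section
/- For the Tower of Hanoi on the star graph S_3 (center 1, leaves 2, 3, 4), define H(n) by H(0) = 0 and H(n) = min_{1≤t≤n}{ 2·H(n−t) + 3^t − 1 }. Then H(n) moves suffice to transfer n disks from leaf 2 to leaf 3. -/
/-- One legal move of the Tower of Hanoi on a graph with adjacency `adj`. -/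
def HanoiMove {α : Type*} (adj : α → α → Prop) {n : ℕ} (c c' : Fin n → α) : Prop :=
  ∃ d : Fin n, adj (c d) (c' d) ∧ (∀ e, e ≠ d → c e = c' e) ∧
    ∀ e, e < d → c e ≠ c d ∧ c e ≠ c' d

/-- Configuration `c₁` is reachable from `c₀` in exactly `m` moves. -/
def HanoiReach {α : Type*} (adj : α → α → Prop) {n : ℕ} (c₀ c₁ : Fin n → α) (m : ℕ) : Prop :=
  ∃ f : ℕ → Fin n → α, f 0 = c₀ ∧ f m = c₁ ∧ ∀ i < m, HanoiMove adj (f i) (f (i + 1))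

/-- Adjacency of the star graph S₃ on vertices Fin 4: vertex 0 is the center,
connected to the three leaves 1, 2, 3. -/
def S3adj (x y : Fin 4) : Prop :=
  (x = 0 ∧ y ≠ 0) ∨ (y = 0 ∧ x ≠ 0)

/-- Reachability avoiding peg `s` throughout. -/
def PReach (s : Fin 4) {n : ℕ} (c₀ c₁ : Fin n → Fin 4) (m : ℕ) : Prop :=
  ∃ f : ℕ → Fin n → Fin 4, f 0 = c₀ ∧ f m = c₁ ∧
    (∀ i < m, HanoiMove S3adj (f i) (f (i + 1))) ∧
    ∀ i ≤ m, ∀ j, f i j ≠ s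

def pad (k n : ℕ) (c : Fin k → Fin 4) (r : Fin 4) : Fin n → Fin 4 :=
  fun j => if h : j.val < k then c ⟨j.val, h⟩ else r

def pad2 (k t n : ℕ) (hn : k + t = n) (big : Fin t → Fin 4) (s : Fin 4) : Fin n → Fin 4 :=
  fun j => if h : j.val < k then s else big ⟨j.val - k, by have := j.isLt; omega⟩

lemma pad_const (k n : ℕ) (r : Fin 4) : pad k n (fun _ => r) r = fun _ => r := by
  funext j; simp only [pad]; split <;> rfl

lemma pad2_pad (k t n : ℕ) (hn : k + t = n) (r s : Fin 4) :
    pad2 k t n hn (fun _ => r) s = pad k n (fun _ => s) r := by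
  funext j; simp only [pad, pad2]

lemma reach_trans {α : Type*} {adj : α → α → Prop} {n : ℕ} {c₀ c₁ c₂ : Fin n → α} {m₁ m₂ : ℕ}
    (h1 : HanoiReach adj c₀ c₁ m₁) (h2 : HanoiReach adj c₁ c₂ m₂) :
    HanoiReach adj c₀ c₂ (m₁ + m₂) := by
  obtain ⟨f, hf0, hf1, hfm⟩ := h1
  obtain ⟨g, hg0, hg1, hgm⟩ := h2
  refine ⟨fun i => if i < m₁ then f i else g (i - m₁), ?_, ?_, ?_⟩
  · by_cases h : 0 < m₁
    · simpa [h] using hf0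
    · have hm : m₁ = 0 := by omega
      have : c₀ = c₁ := by rw [← hf0, ← hf1, hm]
      simp [hm, hg0, this]
  · have h : ¬ (m₁ + m₂ < m₁) := by omega
    simp [h, hg1]
  · intro i hi
    rcases Nat.lt_or_ge i m₁ with h | h
    · rcases Nat.lt_or_ge (i + 1) m₁ with h' | h'
      · simpa [h, h'] using hfm i h
      · have h'' : i + 1 = m₁ := by omega
        have : g (i + 1 - m₁) = f (i + 1) := by rw [h'']; simp [hg0, ← hf1]
        simp only [if_pos h, if_neg (by omega : ¬ i + 1 < m₁), this]
        exact hfm i h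
    · have h1' : ¬ i < m₁ := by omega
      have h2' : ¬ i + 1 < m₁ := by omega
      have he : i + 1 - m₁ = (i - m₁) + 1 := by omega
      simp only [if_neg h1', if_neg h2', he]
      exact hgm (i - m₁) (by omega)

lemma preach_trans {n : ℕ} {s : Fin 4} {c₀ c₁ c₂ : Fin n → Fin 4} {m₁ m₂ : ℕ}
    (h1 : PReach s c₀ c₁ m₁) (h2 : PReach s c₁ c₂ m₂) :
    PReach s c₀ c₂ (m₁ + m₂) := by
  obtain ⟨f, hf0, hf1, hfm, hfs⟩ := h1
  obtain ⟨g, hg0, hg1, hgm, hgs⟩ := h2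
  refine ⟨fun i => if i < m₁ then f i else g (i - m₁), ?_, ?_, ?_, ?_⟩
  · by_cases h : 0 < m₁
    · simpa [h] using hf0
    · have hm : m₁ = 0 := by omega
      have : c₀ = c₁ := by rw [← hf0, ← hf1, hm]
      simp [hm, hg0, this]
  · have h : ¬ (m₁ + m₂ < m₁) := by omega
    simp [h, hg1]
  · intro i hi
    rcases Nat.lt_or_ge i m₁ with h | h
    · rcases Nat.lt_or_ge (i + 1) m₁ with h' | h'
      · simpa [h, h'] using hfm i h
      · have h'' : i + 1 = m₁ := by omega
        have : g (i + 1 - m₁) = f (i + 1) := by rw [h'']; simp [hg0, ← hf1]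
        simp only [if_pos h, if_neg (by omega : ¬ i + 1 < m₁), this]
        exact hfm i h
    · have h1' : ¬ i < m₁ := by omega
      have h2' : ¬ i + 1 < m₁ := by omega
      have he : i + 1 - m₁ = (i - m₁) + 1 := by omega
      simp only [if_neg h1', if_neg h2', he]
      exact hgm (i - m₁) (by omega)
  · intro i hi j
    rcases Nat.lt_or_ge i m₁ with h | h
    · simpa [h] using hfs i (by omega) j
    · simpa [Nat.not_lt.mpr h] using hgs (i - m₁) (by omega) j

lemma preach_toReach {n : ℕ} {s : Fin 4} {c₀ c₁ : Fin n → Fin 4} {m : ℕ}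
    (h : PReach s c₀ c₁ m) : HanoiReach S3adj c₀ c₁ m := by
  obtain ⟨f, hf0, hf1, hfm, _⟩ := h
  exact ⟨f, hf0, hf1, hfm⟩

lemma liftTop {k n : ℕ} (hkn : k ≤ n) (r : Fin 4) {c₀ c₁ : Fin k → Fin 4} {m : ℕ}
    (h : HanoiReach S3adj c₀ c₁ m) :
    HanoiReach S3adj (pad k n c₀ r) (pad k n c₁ r) m := by
  obtain ⟨f, hf0, hf1, hfm⟩ := h
  refine ⟨fun i => pad k n (f i) r, show pad k n (f 0) r = _ by rw [hf0],
    show pad k n (f m) r = _ by rw [hf1], ?_⟩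
  intro i hi
  obtain ⟨d, hadj, hoth, hsm⟩ := hfm i hi
  refine ⟨⟨d.val, lt_of_lt_of_le d.isLt hkn⟩, ?_, ?_, ?_⟩
  · simpa [pad, d.isLt] using hadj
  · intro e he
    by_cases hek : e.val < k
    · have hne : (⟨e.val, hek⟩ : Fin k) ≠ d := by
        intro hc
        exact he (by apply Fin.ext; simpa using congrArg Fin.val hc)
      simpa [pad, hek] using hoth ⟨e.val, hek⟩ hne
    · simp [pad, hek]
  · intro e he
    have he' : e.val < d.val := he
    have hek : e.val < k := lt_trans he' d.isLt
    have := hsm ⟨e.val, hek⟩ (by exact he')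
    constructor
    · simpa [pad, hek, d.isLt] using this.1
    · simpa [pad, hek, d.isLt] using this.2

lemma liftTopP {k n : ℕ} (hkn : k ≤ n) {s : Fin 4} (r : Fin 4) (hrs : r ≠ s)
    {c₀ c₁ : Fin k → Fin 4} {m : ℕ}
    (h : PReach s c₀ c₁ m) :
    PReach s (pad k n c₀ r) (pad k n c₁ r) m := by
  obtain ⟨f, hf0, hf1, hfm, hfs⟩ := h
  refine ⟨fun i => pad k n (f i) r, show pad k n (f 0) r = _ by rw [hf0],
    show pad k n (f m) r = _ by rw [hf1], ?_, ?_⟩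
  · intro i hi
    obtain ⟨d, hadj, hoth, hsm⟩ := hfm i hi
    refine ⟨⟨d.val, lt_of_lt_of_le d.isLt hkn⟩, ?_, ?_, ?_⟩
    · simpa [pad, d.isLt] using hadj
    · intro e he
      by_cases hek : e.val < k
      · have hne : (⟨e.val, hek⟩ : Fin k) ≠ d := by
          intro hc
          exact he (by apply Fin.ext; simpa using congrArg Fin.val hc)
        simpa [pad, hek] using hoth ⟨e.val, hek⟩ hne
      · simp [pad, hek]
    · intro e he
      have he' : e.val < d.val := he
      have hek : e.val < k := lt_trans he' d.isLt
      have := hsm ⟨e.val, hek⟩ (by exact he')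
      constructor
      · simpa [pad, hek, d.isLt] using this.1
      · simpa [pad, hek, d.isLt] using this.2
  · intro i hi j
    by_cases hjk : j.val < k
    · simpa [pad, hjk] using hfs i hi ⟨j.val, hjk⟩
    · simpa [pad, hjk] using hrs

lemma liftBot {k t n : ℕ} (hn : k + t = n) {s : Fin 4} {c₀ c₁ : Fin t → Fin 4} {m : ℕ}
    (h : PReach s c₀ c₁ m) :
    HanoiReach S3adj (pad2 k t n hn c₀ s) (pad2 k t n hn c₁ s) m := by
  obtain ⟨f, hf0, hf1, hfm, hfs⟩ := h
  refine ⟨fun i => pad2 k t n hn (f i) s, show pad2 k t n hn (f 0) s = _ by rw [hf0],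
    show pad2 k t n hn (f m) s = _ by rw [hf1], ?_⟩
  intro i hi
  obtain ⟨d, hadj, hoth, hsm⟩ := hfm i hi
  have hdn : k + d.val < n := by have := d.isLt; omega
  refine ⟨⟨k + d.val, hdn⟩, ?_, ?_, ?_⟩
  · have hb : ¬ (k + d.val < k) := by omega
    have hidx : (⟨k + d.val - k, by have := d.isLt; omega⟩ : Fin t) = d := by
      apply Fin.ext; simp
    simpa [pad2, hb, hidx] using hadj
  · intro e he
    by_cases hek : e.val < k
    · simp [pad2, hek]
    · have hne : (⟨e.val - k, by have := e.isLt; omega⟩ : Fin t) ≠ d := by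
        intro hc
        have := congrArg Fin.val hc
        simp at this
        exact he (by apply Fin.ext; simp; omega)
      simpa [pad2, hek] using hoth _ hne
  · intro e he
    have he' : e.val < k + d.val := he
    by_cases hek : e.val < k
    · have hs1 : f i d ≠ s := hfs i (by omega) d
      have hs2 : f (i + 1) d ≠ s := hfs (i + 1) (by omega) d
      have hb : ¬ (k + d.val < k) := by omega
      have hidx : (⟨k + d.val - k, by have := d.isLt; omega⟩ : Fin t) = d := by
        apply Fin.ext; simp
      constructor
      · simp only [pad2, dif_pos hek, dif_neg hb, hidx]
        exact fun hc => hs1 hc.symm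
      · simp only [pad2, dif_pos hek, dif_neg hb, hidx]
        exact fun hc => hs2 hc.symm
    · have hlt : (⟨e.val - k, by have := e.isLt; omega⟩ : Fin t) < d := by
        show e.val - k < d.val; omega
      have := hsm _ hlt
      have hb : ¬ (k + d.val < k) := by omega
      have hidx : (⟨k + d.val - k, by have := d.isLt; omega⟩ : Fin t) = d := by
        apply Fin.ext; simp
      constructor
      · simpa [pad2, hek, hb, hidx] using this.1
      · simpa [pad2, hek, hb, hidx] using this.2

lemma preach_single {n : ℕ} {s : Fin 4} {c₀ c₁ : Fin n → Fin 4}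
    (hmv : HanoiMove S3adj c₀ c₁) (h0 : ∀ j, c₀ j ≠ s) (h1 : ∀ j, c₁ j ≠ s) :
    PReach s c₀ c₁ 1 := by
  refine ⟨fun i => if i = 0 then c₀ else c₁, by simp, by simp, ?_, ?_⟩
  · intro i hi
    have hi0 : i = 0 := by omega
    subst hi0
    simpa using hmv
  · intro i _ j
    by_cases h : i = 0 <;> simp [h, h0 j, h1 j]

lemma preach_bigmove {t : ℕ} {s x u v : Fin 4} (hadj : S3adj u v)
    (hxu : x ≠ u) (hxv : x ≠ v) (hxs : x ≠ s) (hus : u ≠ s) (hvs : v ≠ s) :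
    PReach s (pad t (t + 1) (fun _ => x) u) (pad t (t + 1) (fun _ => x) v) 1 := by
  refine preach_single ?_ ?_ ?_
  · refine ⟨⟨t, Nat.lt_succ_self t⟩, ?_, ?_, ?_⟩
    · simpa [pad] using hadj
    · intro e he
      have het : e.val < t := by
        have h1 := e.isLt
        have h2 : e.val ≠ t := fun hc => he (by apply Fin.ext; simpa using hc)
        omega
      simp [pad, het]
    · intro e he
      have het : e.val < t := he
      simp only [pad, dif_pos het, dif_neg (lt_irrefl t)]
      exact ⟨hxu, hxv⟩
  · intro j
    by_cases hj : j.val < t <;> simp [pad, hj, hxs, hus]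
  · intro j
    by_cases hj : j.val < t <;> simp [pad, hj, hxs, hvs]

lemma P3 (t : ℕ) : ∀ (a b s : Fin 4), a ≠ 0 → b ≠ 0 → a ≠ b → s ≠ 0 → s ≠ a → s ≠ b →
    PReach s (fun _ : Fin t => a) (fun _ => b) (3 ^ t - 1) := by
  induction t with
  | zero =>
    intro a b s _ _ _ _ _ _
    refine ⟨fun _ => fun j => j.elim0, funext fun j => j.elim0, funext fun j => j.elim0,
      ?_, fun _ _ j => j.elim0⟩
    intro i hi
    simp at hi
  | succ t ih =>
    intro a b s ha hb hab hs0 hsa hsb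
    have hadj1 : S3adj a 0 := Or.inr ⟨rfl, ha⟩
    have hadj2 : S3adj (0 : Fin 4) b := Or.inl ⟨rfl, hb⟩
    have h1 := liftTopP (Nat.le_succ t) a (Ne.symm hsa) (ih a b s ha hb hab hs0 hsa hsb)
    have h2 := preach_bigmove (t := t) (s := s) hadj1 hab.symm hb hsb.symm (Ne.symm hsa) hs0.symm
    have h3 := liftTopP (Nat.le_succ t) (0 : Fin 4) (Ne.symm hs0) (ih b a s hb ha hab.symm hs0 hsb hsa)
    have h4 := preach_bigmove (t := t) (s := s) hadj2 ha hab hsa.symm hs0.symm (Ne.symm hsb)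
    have h5 := liftTopP (Nat.le_succ t) b (Ne.symm hsb) (ih a b s ha hb hab hs0 hsa hsb)
    have chain := preach_trans (preach_trans (preach_trans (preach_trans h1 h2) h3) h4) h5
    rw [pad_const, pad_const] at chain
    have h3t : 1 ≤ 3 ^ t := Nat.one_le_pow _ _ (by norm_num)
    have hlen : (3 ^ t - 1 + 1 + (3 ^ t - 1) + 1 + (3 ^ t - 1)) = 3 ^ (t + 1) - 1 := by
      have : 3 ^ (t + 1) = 3 * 3 ^ t := by ring
      omega
    rwa [hlen] at chain

/-- Tower of Hanoi on the star graph S₃: with H(n) = min{2·H(n−t) + 3^t − 1},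
H(n) moves suffice to transfer n disks from leaf 2 to leaf 3 (here leaves 1 and 2
of Fin 4, with center 0). -/
theorem hanoi_star_S3_upper_bound
    (H : ℕ → ℕ) (hH0 : H 0 = 0)
    (hH : ∀ n, 1 ≤ n →
      H n = sInf {v | ∃ t, 1 ≤ t ∧ t ≤ n ∧ v = 2 * H (n - t) + (3 ^ t - 1)})
    (n : ℕ) :
    ∃ m, m ≤ H n ∧
      HanoiReach S3adj (fun _ : Fin n => (1 : Fin 4)) (fun _ => 2) m := by
  suffices h : ∀ N, ∀ a b : Fin 4, a ≠ 0 → b ≠ 0 → a ≠ b →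
      ∃ m, m ≤ H N ∧ HanoiReach S3adj (fun _ : Fin N => a) (fun _ => b) m by
    exact h n 1 2 (by decide) (by decide) (by decide)
  intro N
  induction N using Nat.strong_induction_on with
  | _ N ih =>
    intro a b ha hb hab
    rcases Nat.eq_zero_or_pos N with hN | hN
    · subst hN
      refine ⟨0, Nat.zero_le _, fun _ => fun _ => a, rfl, funext fun j => j.elim0, ?_⟩
      intro i hi
      simp at hi
    · have hN1 : 1 ≤ N := hN
      have hmem : H N ∈ {v | ∃ t, 1 ≤ t ∧ t ≤ N ∧ v = 2 * H (N - t) + (3 ^ t - 1)} := by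
        rw [hH N hN1]
        exact Nat.sInf_mem ⟨2 * H (N - N) + (3 ^ N - 1), N, hN1, le_refl N, rfl⟩
      obtain ⟨t, ht1, ht2, hval⟩ := hmem
      have hsex : ∃ s : Fin 4, s ≠ 0 ∧ s ≠ a ∧ s ≠ b := by
        rcases (by decide : ∀ a b : Fin 4, a = 0 ∨ b = 0 ∨ a = b ∨
            ∃ s : Fin 4, s ≠ 0 ∧ s ≠ a ∧ s ≠ b) a b with h | h | h | h
        · exact absurd h ha
        · exact absurd h hb
        · exact absurd h hab
        · exact h
      obtain ⟨s, hs0, hsa, hsb⟩ := hsex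
      set k := N - t with hk
      have hkt : k + t = N := by omega
      have hkN : k < N := by omega
      obtain ⟨m₁, hm₁, r₁⟩ := ih k hkN a s ha hs0 (Ne.symm hsa)
      obtain ⟨m₂, hm₂, r₂⟩ := ih k hkN s b hs0 hb hsb
      have hp3 := P3 t a b s ha hb hab hs0 hsa hsb
      have L1 := liftTop (n := N) (by omega) a r₁
      have L2 := liftBot hkt hp3
      have L3 := liftTop (n := N) (by omega) b r₂
      rw [pad_const] at L1
      rw [pad2_pad, pad2_pad] at L2
      rw [pad_const] at L3
      refine ⟨m₁ + (3 ^ t - 1) + m₂, by omega, ?_⟩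
      exact reach_trans (reach_trans L1 L2) L3
end
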